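/- arXiv:1307.7572 — 5 statements merged into one kernel-verified Lean document; each statement's English description precedes it below -/
import Mathlib

section
/- The 𝔽-algebra U_q(𝔰𝔩₂) has a presentation by generators ν_x, y, y⁻¹, ν_z and relations y y⁻¹ = y⁻¹ y = 1, y ν_x y⁻¹ = q⁻² ν_x, y ν_z y⁻¹ = q² ν_z, and (q ν_z ν_x − q⁻¹ ν_x ν_z)/(q − q⁻¹) = 1 − y². Precisely, there is an 𝔽-algebra isomorphism from the algebra with this presentation to U_q(𝔰𝔩₂) in its Chevalley presentation (generators e, f, k, k⁻¹ and relations k k⁻¹ = k⁻¹ k = 1, k e k⁻¹ = q² e, k f k⁻¹ = q⁻² f, ef − fe = (k − k⁻¹)/(q − q⁻¹)) sending ν_x ↦ −q(q − q⁻¹)kf, y^{±1} ↦ k^{±1}, ν_z ↦ (q − q⁻¹)e, whose inverse sends e ↦ (q − q⁻¹)⁻¹ ν_z, k^{±1} ↦ y^{±1}, f ↦ −q⁻¹(q − q⁻¹)⁻¹ y⁻¹ ν_x. -/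
namespace Paper

/-- Generators for the Chevalley presentation of `U_q(sl2)`: `e`, `f`, `k`, `k⁻¹`. -/
inductive ChGen : Type
  | e | f | k | k'

/-- The defining relations of the Chevalley presentation of `U_q(sl2)`:
`k k⁻¹ = k⁻¹ k = 1`, `k e k⁻¹ = q² e`, `k f k⁻¹ = q⁻² f`,
`ef − fe = (k − k⁻¹)/(q − q⁻¹)`. -/
inductive ChRel (F : Type*) [Field F] (q : F) :
    FreeAlgebra F ChGen → FreeAlgebra F ChGen → Prop
  | kk' : ChRel F q (FreeAlgebra.ι F ChGen.k * FreeAlgebra.ι F ChGen.k') 1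
  | k'k : ChRel F q (FreeAlgebra.ι F ChGen.k' * FreeAlgebra.ι F ChGen.k) 1
  | kek' : ChRel F q
      (FreeAlgebra.ι F ChGen.k * FreeAlgebra.ι F ChGen.e * FreeAlgebra.ι F ChGen.k')
      (q ^ 2 • FreeAlgebra.ι F ChGen.e)
  | kfk' : ChRel F q
      (FreeAlgebra.ι F ChGen.k * FreeAlgebra.ι F ChGen.f * FreeAlgebra.ι F ChGen.k')
      ((q ^ 2)⁻¹ • FreeAlgebra.ι F ChGen.f)
  | ef : ChRel F q
      ((q - q⁻¹) • (FreeAlgebra.ι F ChGen.e * FreeAlgebra.ι F ChGen.f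
        - FreeAlgebra.ι F ChGen.f * FreeAlgebra.ι F ChGen.e))
      (FreeAlgebra.ι F ChGen.k - FreeAlgebra.ι F ChGen.k')

/-- `U_q(sl2)` in its Chevalley presentation. -/
abbrev UChev (F : Type*) [Field F] (q : F) := RingQuot (ChRel F q)

noncomputable def ce (F : Type*) [Field F] (q : F) : UChev F q :=
  RingQuot.mkAlgHom F (ChRel F q) (FreeAlgebra.ι F ChGen.e)

noncomputable def cf (F : Type*) [Field F] (q : F) : UChev F q :=
  RingQuot.mkAlgHom F (ChRel F q) (FreeAlgebra.ι F ChGen.f)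

noncomputable def ck (F : Type*) [Field F] (q : F) : UChev F q :=
  RingQuot.mkAlgHom F (ChRel F q) (FreeAlgebra.ι F ChGen.k)

noncomputable def ck' (F : Type*) [Field F] (q : F) : UChev F q :=
  RingQuot.mkAlgHom F (ChRel F q) (FreeAlgebra.ι F ChGen.k')

/-- Generators for the modified Chevalley presentation: `ν_x`, `y`, `y⁻¹`, `ν_z`. -/
inductive MGen : Type
  | nx | y | y' | nz

/-- The defining relations of the modified Chevalley presentation:
`y y⁻¹ = y⁻¹ y = 1`, `y ν_x y⁻¹ = q⁻² ν_x`, `y ν_z y⁻¹ = q² ν_z`,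
`(q ν_z ν_x − q⁻¹ ν_x ν_z)/(q − q⁻¹) = 1 − y²`. -/
inductive MRel (F : Type*) [Field F] (q : F) :
    FreeAlgebra F MGen → FreeAlgebra F MGen → Prop
  | yy' : MRel F q (FreeAlgebra.ι F MGen.y * FreeAlgebra.ι F MGen.y') 1
  | y'y : MRel F q (FreeAlgebra.ι F MGen.y' * FreeAlgebra.ι F MGen.y) 1
  | ynx : MRel F q
      (FreeAlgebra.ι F MGen.y * FreeAlgebra.ι F MGen.nx * FreeAlgebra.ι F MGen.y')
      ((q ^ 2)⁻¹ • FreeAlgebra.ι F MGen.nx)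
  | ynz : MRel F q
      (FreeAlgebra.ι F MGen.y * FreeAlgebra.ι F MGen.nz * FreeAlgebra.ι F MGen.y')
      (q ^ 2 • FreeAlgebra.ι F MGen.nz)
  | nznx : MRel F q
      (q • (FreeAlgebra.ι F MGen.nz * FreeAlgebra.ι F MGen.nx)
        - q⁻¹ • (FreeAlgebra.ι F MGen.nx * FreeAlgebra.ι F MGen.nz))
      ((q - q⁻¹) • (1 - FreeAlgebra.ι F MGen.y * FreeAlgebra.ι F MGen.y))

/-- The algebra with the modified Chevalley presentation. -/
abbrev UMod (F : Type*) [Field F] (q : F) := RingQuot (MRel F q)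

noncomputable def mnx (F : Type*) [Field F] (q : F) : UMod F q :=
  RingQuot.mkAlgHom F (MRel F q) (FreeAlgebra.ι F MGen.nx)

noncomputable def my (F : Type*) [Field F] (q : F) : UMod F q :=
  RingQuot.mkAlgHom F (MRel F q) (FreeAlgebra.ι F MGen.y)

noncomputable def my' (F : Type*) [Field F] (q : F) : UMod F q :=
  RingQuot.mkAlgHom F (MRel F q) (FreeAlgebra.ι F MGen.y')

noncomputable def mnz (F : Type*) [Field F] (q : F) : UMod F q :=
  RingQuot.mkAlgHom F (MRel F q) (FreeAlgebra.ι F MGen.nz)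


/-! Both families of images satisfy the relations of the other presentation. The key is to read
the conjugation relations as commutation rules `k e = q² e k`, `ν_x y⁻¹ = q⁻² y⁻¹ ν_x`,
`ν_z y⁻¹ = q² y⁻¹ ν_z`: with them `q ν_z ν_x − q⁻¹ ν_x ν_z` is sent to
`−(q − q⁻¹)² k (ef − fe) = (q − q⁻¹)(1 − k²)`, and `(q − q⁻¹)(EF − FE)` for the images `E`, `F` of
`e`, `f` becomes `−y⁻¹ (1 − y²) = y − y⁻¹`. Hence both maps exist by the universal property of the
quotients, and they are mutually inverse since they are so on generators, which only needs
`k⁻¹ k = 1` and `q − q⁻¹ ≠ 0`; the latter holds because `q² ≠ 1`. -/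

theorem mul_eq_mul_of_conj_eq {M : Type*} [Monoid M] {u u' a b : M} (h : u' * u = 1)
    (hab : u * a * u' = b) :
    u * a = b * u := by
  rw [← hab, mul_assoc _ u', h, mul_one]

theorem mul_eq_mul_of_conj_eq' {M : Type*} [Monoid M] {u u' a b : M} (h : u' * u = 1)
    (hab : u * a * u' = b) :
    a * u' = u' * b := by
  rw [← hab, ← mul_assoc, ← mul_assoc, h, one_mul]

section Relations

variable {F : Type*} [Field F] {A : Type*} [Ring A] [Algebra F A]

structure ChevalleyRelations (q : F) (e f k k' : A) : Prop where
  kk' : k * k' = 1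
  k'k : k' * k = 1
  kek' : k * e * k' = q ^ 2 • e
  kfk' : k * f * k' = (q ^ 2)⁻¹ • f
  ef : (q - q⁻¹) • (e * f - f * e) = k - k'

structure ModifiedRelations (q : F) (nx y y' nz : A) : Prop where
  yy' : y * y' = 1
  y'y : y' * y = 1
  ynx : y * nx * y' = (q ^ 2)⁻¹ • nx
  ynz : y * nz * y' = q ^ 2 • nz
  nznx : q • (nz * nx) - q⁻¹ • (nx * nz) = (q - q⁻¹) • (1 - y * y)

theorem ChevalleyRelations.modified {q : F} {e f k k' : A} (h : ChevalleyRelations q e f k k')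
    (hq : q ≠ 0) :
    ModifiedRelations q ((-(q * (q - q⁻¹))) • (k * f)) k k' ((q - q⁻¹) • e) where
  yy' := h.kk'
  y'y := h.k'k
  ynx := by
    rw [mul_smul_comm, smul_mul_assoc, mul_assoc k, h.kfk', mul_smul_comm, smul_comm]
  ynz := by rw [mul_smul_comm, smul_mul_assoc, h.kek', smul_comm]
  nznx := by
    have hke : k * e = q ^ 2 • e * k := mul_eq_mul_of_conj_eq h.k'k h.kek'
    calc _ = -(q - q⁻¹) • (k * ((q - q⁻¹) • (e * f - f * e))) := by
          simp only [mul_sub, ← mul_assoc, hke, smul_mul_assoc, mul_smul_comm, smul_smul, smul_sub]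
          match_scalars <;> field_simp
          ring
      _ = (q - q⁻¹) • (1 - k * k) := by
          rw [h.ef, mul_sub, h.kk']
          module

theorem ModifiedRelations.chevalley {q : F} {nx y y' nz : A} (h : ModifiedRelations q nx y y' nz)
    (hq : q ≠ 0) (hd : q - q⁻¹ ≠ 0) :
    ChevalleyRelations q ((q - q⁻¹)⁻¹ • nz) ((-(q⁻¹ * (q - q⁻¹)⁻¹)) • (y' * nx)) y y' where
  kk' := h.yy'
  k'k := h.y'y
  kek' := by rw [mul_smul_comm, smul_mul_assoc, h.ynz, smul_comm]
  kfk' := by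
    rw [mul_smul_comm, smul_mul_assoc, ← mul_assoc, h.yy', one_mul,
      mul_eq_mul_of_conj_eq' h.y'y h.ynx, mul_smul_comm, smul_comm]
  ef := by
    have hzy' : nz * y' = y' * q ^ 2 • nz := mul_eq_mul_of_conj_eq' h.y'y h.ynz
    calc _ = -(q - q⁻¹)⁻¹ • (y' * (q • (nz * nx) - q⁻¹ • (nx * nz))) := by
          simp only [mul_sub, mul_assoc, ← mul_assoc nz, hzy', smul_mul_assoc, mul_smul_comm,
            smul_smul, smul_sub]
          match_scalars <;> field_simp
      _ = y - y' := by
          rw [h.nznx, mul_smul_comm, smul_smul, neg_mul, inv_mul_cancel₀ hd, mul_sub, mul_one,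
            ← mul_assoc, h.y'y, one_mul]
          module

end Relations

theorem sub_inv_ne_zero_of_pow_four_ne_one {K : Type*} [DivisionRing K] {q : K} (hq : q ≠ 0)
    (hq4 : q ^ 4 ≠ 1) : q - q⁻¹ ≠ 0 := by
  intro h
  have hq2 : q ^ 2 = 1 := by
    rw [sq]
    nth_rw 2 [sub_eq_zero.mp h]
    exact mul_inv_cancel₀ hq
  exact hq4 (by rw [show 4 = 2 * 2 from rfl, pow_mul, hq2, one_pow])

section Presentations

variable {F : Type*} [Field F] {q : F} {A : Type*} [Ring A] [Algebra F A]

variable (F q) in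
theorem chevalleyRelations_generators :
    ChevalleyRelations q (ce F q) (cf F q) (ck F q) (ck' F q) := by
  have rel {a b} (h : ChRel F q a b) := RingQuot.mkAlgHom_rel F h
  unfold ce cf ck ck'
  exact ⟨by simpa using rel .kk', by simpa using rel .k'k, by simpa using rel .kek',
    by simpa using rel .kfk', by simpa using rel .ef⟩

variable (F q) in
theorem modifiedRelations_generators :
    ModifiedRelations q (mnx F q) (my F q) (my' F q) (mnz F q) := by
  have rel {a b} (h : MRel F q a b) := RingQuot.mkAlgHom_rel F h
  unfold mnx my my' mnz
  exact ⟨by simpa using rel .yy', by simpa using rel .y'y, by simpa using rel .ynx,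
    by simpa using rel .ynz, by simpa using rel .nznx⟩

namespace UChev

noncomputable def lift {e f k k' : A} (h : ChevalleyRelations q e f k k') :
    UChev F q →ₐ[F] A :=
  RingQuot.liftAlgHom F ⟨FreeAlgebra.lift F fun | .e => e | .f => f | .k => k | .k' => k',
    fun _ _ hab => by cases hab <;> simp [h.kk', h.k'k, h.kek', h.kfk', h.ef]⟩

variable {e f k k' : A} (h : ChevalleyRelations q e f k k')

@[simp] theorem lift_ce : lift h (ce F q) = e := by simp [lift, ce]
@[simp] theorem lift_cf : lift h (cf F q) = f := by simp [lift, cf]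
@[simp] theorem lift_ck : lift h (ck F q) = k := by simp [lift, ck]
@[simp] theorem lift_ck' : lift h (ck' F q) = k' := by simp [lift, ck']

theorem algHom_ext {φ ψ : UChev F q →ₐ[F] A} (he : φ (ce F q) = ψ (ce F q))
    (hf : φ (cf F q) = ψ (cf F q)) (hk : φ (ck F q) = ψ (ck F q))
    (hk' : φ (ck' F q) = ψ (ck' F q)) : φ = ψ :=
  RingQuot.ringQuot_ext' _ _ _ <| FreeAlgebra.hom_ext <| funext fun g => by
    cases g <;> assumption

end UChev

namespace UMod

noncomputable def lift {nx y y' nz : A} (h : ModifiedRelations q nx y y' nz) :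
    UMod F q →ₐ[F] A :=
  RingQuot.liftAlgHom F ⟨FreeAlgebra.lift F fun | .nx => nx | .y => y | .y' => y' | .nz => nz,
    fun _ _ hab => by cases hab <;> simp [h.yy', h.y'y, h.ynx, h.ynz, h.nznx]⟩

variable {nx y y' nz : A} (h : ModifiedRelations q nx y y' nz)

@[simp] theorem lift_mnx : lift h (mnx F q) = nx := by simp [lift, mnx]
@[simp] theorem lift_my : lift h (my F q) = y := by simp [lift, my]
@[simp] theorem lift_my' : lift h (my' F q) = y' := by simp [lift, my']
@[simp] theorem lift_mnz : lift h (mnz F q) = nz := by simp [lift, mnz]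

theorem algHom_ext {φ ψ : UMod F q →ₐ[F] A} (hnx : φ (mnx F q) = ψ (mnx F q))
    (hy : φ (my F q) = ψ (my F q)) (hy' : φ (my' F q) = ψ (my' F q))
    (hnz : φ (mnz F q) = ψ (mnz F q)) : φ = ψ :=
  RingQuot.ringQuot_ext' _ _ _ <| FreeAlgebra.hom_ext <| funext fun g => by
    cases g <;> assumption

end UMod

variable (hq : q ≠ 0) (hd : q - q⁻¹ ≠ 0)

noncomputable def modToChev : UMod F q →ₐ[F] UChev F q :=
  UMod.lift ((chevalleyRelations_generators F q).modified hq)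

noncomputable def chevToMod : UChev F q →ₐ[F] UMod F q :=
  UChev.lift ((modifiedRelations_generators F q).chevalley hq hd)

theorem modToChev_comp_chevToMod :
    (modToChev hq).comp (chevToMod hq hd) = AlgHom.id F (UChev F q) := by
  have hk'k := (chevalleyRelations_generators F q).k'k
  have hscalar : q⁻¹ * (q - q⁻¹)⁻¹ * q * (q - q⁻¹) = 1 := by
    rw [mul_right_comm _ _ q, inv_mul_cancel₀ hq, one_mul, inv_mul_cancel₀ hd]
  apply UChev.algHom_ext <;>
    simp [modToChev, chevToMod, smul_smul, ← mul_assoc, hk'k, hd, hscalar]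

theorem chevToMod_comp_modToChev :
    (chevToMod hq hd).comp (modToChev hq) = AlgHom.id F (UMod F q) := by
  have hyy' := (modifiedRelations_generators F q).yy'
  have hscalar : q * (q - q⁻¹) * q⁻¹ * (q - q⁻¹)⁻¹ = 1 := by
    rw [mul_right_comm q, mul_inv_cancel₀ hq, one_mul, mul_inv_cancel₀ hd]
  apply UMod.algHom_ext <;>
    simp [modToChev, chevToMod, smul_smul, ← mul_assoc, hyy', hd, hscalar]

end Presentations

/-- **Theorem 6.2 (modified Chevalley presentation).**
The algebra presented by generators `ν_x, y, y⁻¹, ν_z` and relations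
`y y⁻¹ = y⁻¹ y = 1`, `y ν_x y⁻¹ = q⁻² ν_x`, `y ν_z y⁻¹ = q² ν_z`,
`(q ν_z ν_x − q⁻¹ ν_x ν_z)/(q − q⁻¹) = 1 − y²` is isomorphic to `U_q(sl2)` in its
Chevalley presentation, via the isomorphism sending
`ν_x ↦ −q(q − q⁻¹) k f`, `y^{±1} ↦ k^{±1}`, `ν_z ↦ (q − q⁻¹) e`, whose
inverse sends `e ↦ (q − q⁻¹)⁻¹ ν_z`, `k^{±1} ↦ y^{±1}`,
`f ↦ −q⁻¹ (q − q⁻¹)⁻¹ y⁻¹ ν_x`. -/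
theorem statement0 (F : Type*) [Field F] (q : F) (hq0 : q ≠ 0) (hq4 : q ^ 4 ≠ 1) :
    ∃ e : UMod F q ≃ₐ[F] UChev F q,
      e (mnx F q) = (-(q * (q - q⁻¹))) • (ck F q * cf F q) ∧
      e (my F q) = ck F q ∧
      e (my' F q) = ck' F q ∧
      e (mnz F q) = (q - q⁻¹) • ce F q ∧
      e.symm (ce F q) = (q - q⁻¹)⁻¹ • mnz F q ∧
      e.symm (ck F q) = my F q ∧
      e.symm (ck' F q) = my' F q ∧
      e.symm (cf F q) = (-(q⁻¹ * (q - q⁻¹)⁻¹)) • (my' F q * mnx F q) := by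
  have hd := sub_inv_ne_zero_of_pow_four_ne_one hq0 hq4
  refine ⟨AlgEquiv.ofAlgHom (modToChev hq0) (chevToMod hq0 hd)
    (modToChev_comp_chevToMod hq0 hd) (chevToMod_comp_modToChev hq0 hd), ?_⟩
  simp [modToChev, chevToMod, AlgEquiv.ofAlgHom_symm]

end Paper
end

section
/- The monomials x^r ȳ^s z^t, for r, s, t ranging over the natural numbers, form a basis of the 𝔽-vector space Ū_q. -/
namespace Paper

/-- Generators for the algebra `Ū_q`: `x`, `ȳ`, `z`. -/
inductive BGen : Type
  | x | y | z

/-- The defining relations of `Ū_q`: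
`(q ȳ x − q⁻¹ x ȳ)/(q − q⁻¹) = ȳ²`, `(q z ȳ − q⁻¹ ȳ z)/(q − q⁻¹) = ȳ²`,
`(q z x − q⁻¹ x z)/(q − q⁻¹) = 1`. -/
inductive BRel (F : Type*) [Field F] (q : F) :
    FreeAlgebra F BGen → FreeAlgebra F BGen → Prop
  | yx : BRel F q
      (q • (FreeAlgebra.ι F BGen.y * FreeAlgebra.ι F BGen.x)
        - q⁻¹ • (FreeAlgebra.ι F BGen.x * FreeAlgebra.ι F BGen.y))
      ((q - q⁻¹) • (FreeAlgebra.ι F BGen.y * FreeAlgebra.ι F BGen.y))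
  | zy : BRel F q
      (q • (FreeAlgebra.ι F BGen.z * FreeAlgebra.ι F BGen.y)
        - q⁻¹ • (FreeAlgebra.ι F BGen.y * FreeAlgebra.ι F BGen.z))
      ((q - q⁻¹) • (FreeAlgebra.ι F BGen.y * FreeAlgebra.ι F BGen.y))
  | zx : BRel F q
      (q • (FreeAlgebra.ι F BGen.z * FreeAlgebra.ι F BGen.x)
        - q⁻¹ • (FreeAlgebra.ι F BGen.x * FreeAlgebra.ι F BGen.z))
      ((q - q⁻¹) • (1 : FreeAlgebra F BGen))

/-- The algebra `Ū_q`. -/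
abbrev Ubar (F : Type*) [Field F] (q : F) := RingQuot (BRel F q)

noncomputable def bx (F : Type*) [Field F] (q : F) : Ubar F q :=
  RingQuot.mkAlgHom F (BRel F q) (FreeAlgebra.ι F BGen.x)

noncomputable def bybar (F : Type*) [Field F] (q : F) : Ubar F q :=
  RingQuot.mkAlgHom F (BRel F q) (FreeAlgebra.ι F BGen.y)

noncomputable def bz (F : Type*) [Field F] (q : F) : Ubar F q :=
  RingQuot.mkAlgHom F (BRel F q) (FreeAlgebra.ι F BGen.z)

/-!
Spanning: the relations rewrite `ȳ x`, `z ȳ` and `z x` as combinations of correctly ordered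
words, so the span of the monomials is a left ideal containing `1`; induction on the `x`-degree
keeps the reordering under control.

Independence: `Ū_q` acts on the vector space with basis `ℕ³` through the normal form
`ȳ^s x^r z^t` with `ȳ` first. The orbit of the basis vector `(0, 0, 0)` sends `x^r ȳ^s z^t` to
`q^(2rs)` times the basis vector `(r, s, t)` plus vectors of larger `ȳ`-degree, and a family
that is triangular in this sense is linearly independent.
-/

theorem mul_mem_of_mem_span {R A : Type*} [CommSemiring R] [Semiring A] [Algebra R A]
    {s : Set A} {p : Submodule R A} {a m : A} (h : ∀ v ∈ s, a * v ∈ p)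
    (hm : m ∈ Submodule.span R s) : a * m ∈ p :=
  (Submodule.span_le (p := p.comap (LinearMap.mulLeft R a))).2 h hm

theorem linearIndependent_of_triangular {ι α R : Type*} [LinearOrder α] [Ring R]
    [NoZeroDivisors R] (deg : ι → α) {v : ι → ι →₀ R} {c : ι → R} (hc : ∀ i, c i ≠ 0)
    (hv : ∀ i, v i - Finsupp.single i (c i) ∈ Finsupp.supported R R {j | deg i < deg j}) :
    LinearIndependent R v := by
  have hentry : ∀ i j, deg j ≤ deg i → v i j = Finsupp.single i (c i) j := fun i j hj =>
    sub_eq_zero.1 <| (Finsupp.mem_supported' R _).1 (hv i) j (not_lt.2 hj)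
  rw [linearIndependent_iff]
  intro l hl
  by_contra hne
  obtain ⟨i, hi, hmin⟩ := l.support.exists_min_image deg (Finsupp.support_nonempty_iff.2 hne)
  have hli : l i * c i = 0 := by
    have := DFunLike.congr_fun hl i
    rw [Finsupp.linearCombination_apply, Finsupp.sum, Finsupp.finsetSum_apply,
      Finset.sum_eq_single i] at this
    · simpa [hentry i i le_rfl] using this
    · intro j hj hji
      simp [hentry j i (hmin j hj), Finsupp.single_eq_of_ne hji.symm]
    · intro h
      simp [Finsupp.notMem_support_iff.1 h]
  exact mul_ne_zero (Finsupp.mem_support_iff.1 hi) (hc i) hli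

theorem eq_smul_add_smul_of_smul_sub_smul {K M : Type*} [Field K] [AddCommGroup M] [Module K M]
    {q : K} (hq : q ≠ 0) {a b c : M} (h : q • a - q⁻¹ • b = (q - q⁻¹) • c) :
    a = q⁻¹ ^ 2 • b + (1 - q⁻¹ ^ 2) • c := by
  linear_combination (norm := skip) q⁻¹ • h
  match_scalars <;> field_simp <;> ring

section

variable {F : Type*} [Field F] {q : F}

theorem bybar_mul_bx (hq : q ≠ 0) : bybar F q * bx F q =
    q⁻¹ ^ 2 • (bx F q * bybar F q) + (1 - q⁻¹ ^ 2) • (bybar F q * bybar F q) := by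
  have h := RingQuot.mkAlgHom_rel F (BRel.yx (q := q))
  simp only [map_sub, map_smul, map_mul] at h
  exact eq_smul_add_smul_of_smul_sub_smul hq h

theorem bz_mul_bybar (hq : q ≠ 0) : bz F q * bybar F q =
    q⁻¹ ^ 2 • (bybar F q * bz F q) + (1 - q⁻¹ ^ 2) • (bybar F q * bybar F q) := by
  have h := RingQuot.mkAlgHom_rel F (BRel.zy (q := q))
  simp only [map_sub, map_smul, map_mul] at h
  exact eq_smul_add_smul_of_smul_sub_smul hq h

theorem bz_mul_bx (hq : q ≠ 0) : bz F q * bx F q =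
    q⁻¹ ^ 2 • (bx F q * bz F q) + (1 - q⁻¹ ^ 2) • (1 : Ubar F q) := by
  have h := RingQuot.mkAlgHom_rel F (BRel.zx (q := q))
  simp only [map_sub, map_smul, map_mul, map_one] at h
  exact eq_smul_add_smul_of_smul_sub_smul hq h

variable (F q) in
noncomputable def monomial (i : ℕ × ℕ × ℕ) : Ubar F q :=
  bx F q ^ i.1 * bybar F q ^ i.2.1 * bz F q ^ i.2.2

variable (F q) in
noncomputable def xFiltration (n : ℕ) : Submodule F (Ubar F q) :=
  Submodule.span F (monomial F q '' {i | i.1 ≤ n})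

theorem xFiltration_mono : Monotone (xFiltration F q) := fun _ _ h =>
  Submodule.span_mono (Set.image_mono fun _ hi => le_trans hi h)

theorem monomial_mem_xFiltration {n r : ℕ} (h : r ≤ n) (s t : ℕ) :
    monomial F q (r, s, t) ∈ xFiltration F q n :=
  Submodule.subset_span ⟨(r, s, t), h, rfl⟩

theorem bx_mul_monomial (r s t : ℕ) :
    bx F q * monomial F q (r, s, t) = monomial F q (r + 1, s, t) := by
  simp only [monomial, pow_succ', mul_assoc]

theorem bybar_mul_monomial_zero (s t : ℕ) :
    bybar F q * monomial F q (0, s, t) = monomial F q (0, s + 1, t) := by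
  simp only [monomial, pow_zero, one_mul, pow_succ', mul_assoc]

theorem bz_mul_monomial_zero_zero (t : ℕ) :
    bz F q * monomial F q (0, 0, t) = monomial F q (0, 0, t + 1) := by
  simp only [monomial, pow_zero, one_mul, pow_succ']

theorem bx_mul_mem_xFiltration {n : ℕ} {m : Ubar F q} (hm : m ∈ xFiltration F q n) :
    bx F q * m ∈ xFiltration F q (n + 1) := by
  refine mul_mem_of_mem_span ?_ hm
  rintro _ ⟨⟨r, s, t⟩, hr, rfl⟩
  rw [bx_mul_monomial]
  exact monomial_mem_xFiltration (Nat.succ_le_succ hr) s t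

theorem bybar_mul_mem_xFiltration (hq : q ≠ 0) (n : ℕ) :
    ∀ m ∈ xFiltration F q n, bybar F q * m ∈ xFiltration F q n := by
  induction n with
  | zero =>
    refine fun m hm => mul_mem_of_mem_span ?_ hm
    rintro _ ⟨⟨r, s, t⟩, hr, rfl⟩
    obtain rfl : r = 0 := Nat.le_zero.1 hr
    rw [bybar_mul_monomial_zero]
    exact monomial_mem_xFiltration le_rfl _ _
  | succ n ih =>
    refine fun m hm => mul_mem_of_mem_span ?_ hm
    rintro _ ⟨⟨r, s, t⟩, hr, rfl⟩
    rcases Nat.of_le_succ hr with hr | rfl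
    · exact xFiltration_mono n.le_succ (ih _ (monomial_mem_xFiltration hr s t))
    · have hmem := monomial_mem_xFiltration (F := F) (q := q) (le_refl n) s t
      rw [← bx_mul_monomial, ← mul_assoc, bybar_mul_bx hq, add_mul, smul_mul_assoc,
        smul_mul_assoc, mul_assoc, mul_assoc]
      exact add_mem (Submodule.smul_mem _ _ (bx_mul_mem_xFiltration (ih _ hmem)))
        (Submodule.smul_mem _ _ (xFiltration_mono n.le_succ (ih _ (ih _ hmem))))

theorem bz_mul_monomial_mem_xFiltration (hq : q ≠ 0) (r s t : ℕ) :
    bz F q * monomial F q (r, s, t) ∈ xFiltration F q r := by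
  induction r generalizing s with
  | zero =>
    induction s with
    | zero =>
      rw [bz_mul_monomial_zero_zero]
      exact monomial_mem_xFiltration le_rfl _ _
    | succ s ih =>
      rw [← bybar_mul_monomial_zero, ← mul_assoc, bz_mul_bybar hq, add_mul, smul_mul_assoc,
        smul_mul_assoc, mul_assoc, mul_assoc, bybar_mul_monomial_zero, bybar_mul_monomial_zero]
      exact add_mem (Submodule.smul_mem _ _ (bybar_mul_mem_xFiltration hq 0 _ ih))
        (Submodule.smul_mem _ _ (monomial_mem_xFiltration le_rfl _ _))
  | succ r ih =>
    rw [← bx_mul_monomial, ← mul_assoc, bz_mul_bx hq, add_mul, smul_mul_assoc,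
      smul_mul_assoc, one_mul, mul_assoc]
    exact add_mem (Submodule.smul_mem _ _ (bx_mul_mem_xFiltration (ih s)))
      (Submodule.smul_mem _ _ (monomial_mem_xFiltration r.le_succ s t))

theorem xFiltration_le_span (n : ℕ) :
    xFiltration F q n ≤ Submodule.span F (Set.range (monomial F q)) :=
  Submodule.span_mono (Set.image_subset_range _ _)

theorem mkAlgHom_mul_mem_span_monomial (hq : q ≠ 0) (a : FreeAlgebra F BGen) {m : Ubar F q}
    (hm : m ∈ Submodule.span F (Set.range (monomial F q))) :
    RingQuot.mkAlgHom F (BRel F q) a * m ∈ Submodule.span F (Set.range (monomial F q)) := by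
  induction a using FreeAlgebra.induction generalizing m with
  | grade0 c =>
    rw [AlgHom.commutes, ← Algebra.smul_def]
    exact Submodule.smul_mem _ _ hm
  | grade1 g =>
    refine mul_mem_of_mem_span ?_ hm
    rintro _ ⟨⟨r, s, t⟩, rfl⟩
    cases g with
    | x =>
      change bx F q * _ ∈ _
      rw [bx_mul_monomial]
      exact Submodule.subset_span ⟨_, rfl⟩
    | y =>
      change bybar F q * _ ∈ _
      exact xFiltration_le_span r
        (bybar_mul_mem_xFiltration hq r _ (monomial_mem_xFiltration (le_refl r) s t))
    | z =>
      change bz F q * _ ∈ _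
      exact xFiltration_le_span r (bz_mul_monomial_mem_xFiltration hq r s t)
  | mul a b iha ihb =>
    rw [map_mul, mul_assoc]
    exact iha (ihb hm)
  | add a b iha ihb =>
    rw [map_add, add_mul]
    exact add_mem (iha hm) (ihb hm)

theorem span_monomial_eq_top (hq : q ≠ 0) :
    Submodule.span F (Set.range (monomial F q)) = ⊤ := by
  refine Submodule.eq_top_iff'.2 fun u => ?_
  obtain ⟨a, rfl⟩ := RingQuot.mkAlgHom_surjective F (BRel F q) u
  have hone : (1 : Ubar F q) ∈ Submodule.span F (Set.range (monomial F q)) :=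
    Submodule.subset_span ⟨(0, 0, 0), by simp [monomial]⟩
  simpa using mkAlgHom_mul_mem_span_monomial hq a hone

-- `single (r, s, t) 1` stands for `ȳ ^ s * x ^ r * z ^ t`. In this order the generators act by
-- the formulas of `genImage`, which come from
-- `x ȳ^s = q^(2s) ȳ^s x + (1 - q^(2s)) ȳ^(s+1)`, `z ȳ^s = q^(-2s) ȳ^s z + (1 - q^(-2s)) ȳ^(s+1)`
-- and `z x^r = q^(-2r) x^r z + (1 - q^(-2r)) x^(r-1)`; at `r = 0` the coefficient of
-- `single (r - 1, s, t)` vanishes, so the truncated subtraction is harmless.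
abbrev PBWModule (F : Type*) [Field F] := ℕ × ℕ × ℕ →₀ F

variable (q) in
noncomputable def genImage : BGen → ℕ × ℕ × ℕ → PBWModule F
  | .x, (r, s, t) => q ^ (2 * s) • Finsupp.single (r + 1, s, t) 1
      + (1 - q ^ (2 * s)) • Finsupp.single (r, s + 1, t) 1
  | .y, (r, s, t) => Finsupp.single (r, s + 1, t) 1
  | .z, (r, s, t) => q⁻¹ ^ (2 * (r + s)) • Finsupp.single (r, s, t + 1) 1
      + (q⁻¹ ^ (2 * s) * (1 - q⁻¹ ^ (2 * r))) • Finsupp.single (r - 1, s, t) 1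
      + (1 - q⁻¹ ^ (2 * s)) • Finsupp.single (r, s + 1, t) 1

variable (q) in
noncomputable def genOp (g : BGen) : Module.End F (PBWModule F) :=
  Finsupp.linearCombination F (genImage q g)

@[simp]
theorem genOp_single (g : BGen) (i : ℕ × ℕ × ℕ) (c : F) :
    genOp q g (Finsupp.single i c) = c • genImage q g i :=
  Finsupp.linearCombination_single F c i

theorem genOp_rel ⦃a b : FreeAlgebra F BGen⦄ (h : BRel F q a b) :
    FreeAlgebra.lift F (genOp q) a = FreeAlgebra.lift F (genOp q) b := by
  obtain rfl | hq := eq_or_ne q 0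
  · cases h <;> simp
  cases h <;> ext ⟨_ | r, s, t⟩ : 2 <;>
    simp only [map_sub, map_smul, map_mul, map_one, map_add, FreeAlgebra.lift_ι_apply,
      LinearMap.sub_apply, LinearMap.smul_apply, Module.End.mul_apply, Module.End.one_apply,
      LinearMap.comp_apply, Finsupp.lsingle_apply, genOp_single, one_smul, genImage,
      Nat.add_sub_cancel, mul_zero, pow_zero, sub_self, zero_smul, add_zero] <;>
    match_scalars <;> simp only [mul_add, mul_one, pow_add, pow_mul, inv_pow] <;> field_simp <;>
    ring

variable (q) in
noncomputable def ubarRep : Ubar F q →ₐ[F] Module.End F (PBWModule F) :=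
  RingQuot.liftAlgHom F ⟨FreeAlgebra.lift F (genOp q), genOp_rel⟩

theorem ubarRep_mkAlgHom_ι (g : BGen) :
    ubarRep q (RingQuot.mkAlgHom F (BRel F q) (FreeAlgebra.ι F g)) = genOp q g := by
  rw [ubarRep, RingQuot.liftAlgHom_mkAlgHom_apply, FreeAlgebra.lift_ι_apply]

theorem ubarRep_bybar_pow_bz_pow (s t : ℕ) :
    ubarRep q (bybar F q ^ s * bz F q ^ t) (Finsupp.single (0, 0, 0) 1) =
      Finsupp.single (0, s, t) 1 := by
  induction s with
  | zero =>
    induction t with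
    | zero => simp
    | succ t ih =>
      rw [pow_zero, one_mul] at ih ⊢
      rw [pow_succ', map_mul, Module.End.mul_apply, ih, bz, ubarRep_mkAlgHom_ι, genOp_single]
      simp [genImage]
  | succ s ih =>
    rw [pow_succ', mul_assoc, map_mul, Module.End.mul_apply, ih, bybar, ubarRep_mkAlgHom_ι,
      genOp_single, one_smul, genImage]

theorem genOp_x_mem_supported {s : ℕ} {m : PBWModule F}
    (hm : m ∈ Finsupp.supported F F {i : ℕ × ℕ × ℕ | s < i.2.1}) :
    genOp q .x m ∈ Finsupp.supported F F {i : ℕ × ℕ × ℕ | s < i.2.1} := by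
  rw [Finsupp.supported_eq_span_single] at hm
  refine (Submodule.span_le (p := (Finsupp.supported F F _).comap (genOp q .x))).2 ?_ hm
  rintro _ ⟨⟨r, s', t⟩, hs, rfl⟩
  simp only [SetLike.mem_coe, Submodule.mem_comap, genOp_single, one_smul, genImage]
  exact add_mem (Submodule.smul_mem _ _ (Finsupp.single_mem_supported F _ hs))
    (Submodule.smul_mem _ _ (Finsupp.single_mem_supported F _ (Nat.lt_succ_of_lt hs)))

theorem ubarRep_monomial_sub_mem_supported (r s t : ℕ) :
    ubarRep q (monomial F q (r, s, t)) (Finsupp.single (0, 0, 0) 1) -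
        Finsupp.single (r, s, t) (q ^ (2 * s * r)) ∈
      Finsupp.supported F F {i : ℕ × ℕ × ℕ | s < i.2.1} := by
  induction r with
  | zero =>
    simp only [monomial, pow_zero, one_mul, mul_zero]
    rw [ubarRep_bybar_pow_bz_pow, sub_self]
    exact zero_mem _
  | succ r ih =>
    have hstep : ubarRep q (monomial F q (r + 1, s, t)) (Finsupp.single (0, 0, 0) 1) -
          Finsupp.single (r + 1, s, t) (q ^ (2 * s * (r + 1))) =
        genOp q .x (ubarRep q (monomial F q (r, s, t)) (Finsupp.single (0, 0, 0) 1) -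
            Finsupp.single (r, s, t) (q ^ (2 * s * r))) +
          (q ^ (2 * s * r) * (1 - q ^ (2 * s))) • Finsupp.single (r, s + 1, t) 1 := by
      rw [← bx_mul_monomial, map_mul, Module.End.mul_apply, bx, ubarRep_mkAlgHom_ι, map_sub,
        genOp_single, genImage, ← Finsupp.smul_single_one (r + 1, s, t)]
      match_scalars <;> ring
    rw [hstep]
    exact add_mem (genOp_x_mem_supported ih)
      (Submodule.smul_mem _ _ (Finsupp.single_mem_supported F _ (by simp)))

theorem linearIndependent_monomial (hq : q ≠ 0) : LinearIndependent F (monomial F q) := by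
  let orbit : Ubar F q →ₗ[F] PBWModule F :=
    LinearMap.applyₗ (Finsupp.single (0, 0, 0) 1) ∘ₗ (ubarRep q).toLinearMap
  exact LinearIndependent.of_comp orbit <|
    linearIndependent_of_triangular (fun i => i.2.1) (c := fun i => q ^ (2 * i.2.1 * i.1))
      (fun _ => pow_ne_zero _ hq) fun i => ubarRep_monomial_sub_mem_supported i.1 i.2.1 i.2.2

end

theorem statement6_general (F : Type*) [Field F] (q : F) (hq0 : q ≠ 0) :
    ∃ b : Module.Basis (ℕ × ℕ × ℕ) F (Ubar F q),
      ∀ r s t : ℕ, b (r, s, t) = bx F q ^ r * bybar F q ^ s * bz F q ^ t :=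
  ⟨.mk (linearIndependent_monomial hq0) (span_monomial_eq_top hq0).ge,
    fun _ _ _ => Module.Basis.mk_apply ..⟩

/-- **Lemma 10.4.** The monomials `x^r ȳ^s z^t` (`r, s, t ∈ ℕ`) form a basis of the
`𝔽`-vector space `Ū_q`. -/
theorem statement6 (F : Type*) [Field F] (q : F) (hq0 : q ≠ 0) (hq4 : q ^ 4 ≠ 1) :
    ∃ b : Module.Basis (ℕ × ℕ × ℕ) F (Ubar F q),
      ∀ r s t : ℕ, b (r, s, t) = bx F q ^ r * bybar F q ^ s * bz F q ^ t :=
  statement6_general F q hq0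

end Paper
end

section
/- The elements A and y^{±1} together generate U_q(𝔰𝔩₂) as an 𝔽-algebra. -/
namespace Paper


/-- Generators for the equitable presentation of `U_q(sl2)`: `x`, `y`, `y⁻¹`, `z`. -/
inductive EqGen : Type
  | x | y | y' | z

/-- The defining relations of the equitable presentation of `U_q(sl2)`. -/
inductive EqRel (F : Type*) [Field F] (q : F) :
    FreeAlgebra F EqGen → FreeAlgebra F EqGen → Prop
  | yy' : EqRel F q (FreeAlgebra.ι F EqGen.y * FreeAlgebra.ι F EqGen.y') 1
  | y'y : EqRel F q (FreeAlgebra.ι F EqGen.y' * FreeAlgebra.ι F EqGen.y) 1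
  | xy : EqRel F q
      (q • (FreeAlgebra.ι F EqGen.x * FreeAlgebra.ι F EqGen.y)
        - q⁻¹ • (FreeAlgebra.ι F EqGen.y * FreeAlgebra.ι F EqGen.x))
      ((q - q⁻¹) • (1 : FreeAlgebra F EqGen))
  | yz : EqRel F q
      (q • (FreeAlgebra.ι F EqGen.y * FreeAlgebra.ι F EqGen.z)
        - q⁻¹ • (FreeAlgebra.ι F EqGen.z * FreeAlgebra.ι F EqGen.y))
      ((q - q⁻¹) • (1 : FreeAlgebra F EqGen))
  | zx : EqRel F q
      (q • (FreeAlgebra.ι F EqGen.z * FreeAlgebra.ι F EqGen.x)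
        - q⁻¹ • (FreeAlgebra.ι F EqGen.x * FreeAlgebra.ι F EqGen.z))
      ((q - q⁻¹) • (1 : FreeAlgebra F EqGen))

/-- `U_q(sl2)` in its equitable presentation. -/
abbrev Usl2 (F : Type*) [Field F] (q : F) := RingQuot (EqRel F q)

noncomputable def ux (F : Type*) [Field F] (q : F) : Usl2 F q :=
  RingQuot.mkAlgHom F (EqRel F q) (FreeAlgebra.ι F EqGen.x)

noncomputable def uy (F : Type*) [Field F] (q : F) : Usl2 F q :=
  RingQuot.mkAlgHom F (EqRel F q) (FreeAlgebra.ι F EqGen.y)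

noncomputable def uy' (F : Type*) [Field F] (q : F) : Usl2 F q :=
  RingQuot.mkAlgHom F (EqRel F q) (FreeAlgebra.ι F EqGen.y')

noncomputable def uz (F : Type*) [Field F] (q : F) : Usl2 F q :=
  RingQuot.mkAlgHom F (EqRel F q) (FreeAlgebra.ι F EqGen.z)

/-- `X = a⁻²x + (1 − a⁻²)y⁻¹`. -/
noncomputable def uX (F : Type*) [Field F] (q a : F) : Usl2 F q :=
  (a ^ 2)⁻¹ • ux F q + (1 - (a ^ 2)⁻¹) • uy' F q

/-- `Z = a²z + (1 − a²)y⁻¹`. -/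
noncomputable def uZ (F : Type*) [Field F] (q a : F) : Usl2 F q :=
  a ^ 2 • uz F q + (1 - a ^ 2) • uy' F q

/-- `A = a⁻¹x + az`. -/
noncomputable def uA (F : Type*) [Field F] (q a : F) : Usl2 F q :=
  a⁻¹ • ux F q + a • uz F q

/-- `U_q^∨`, the subalgebra of `U_q(sl2)` generated by `x`, `y⁻¹`, `z`. -/
noncomputable def Uvee (F : Type*) [Field F] (q : F) : Subalgebra F (Usl2 F q) :=
  Algebra.adjoin F {ux F q, uy' F q, uz F q}

end Paper

/-!
Conjugation by `y` rescales the generators: `y⁻¹ x y = q⁻² x + (1 - q⁻²) y⁻¹` and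
`y⁻¹ z y = q² z + (1 - q²) y⁻¹`. Hence the subalgebra generated by `A, y, y⁻¹` contains both
`a⁻¹x + az` and `q⁻²(a⁻¹x) + q²(az)`; as `q⁻² ≠ q²`, it contains `x` and `z` separately, and so
all four generators of `U_q(sl₂)`.
-/

theorem Submodule.mem_of_add_mem_of_smul_add_smul_mem {F M : Type*} [DivisionRing F]
    [AddCommGroup M] [Module F M] (p : Submodule F M) {u w : M} {c d : F} (hcd : c ≠ d)
    (h₁ : u + w ∈ p) (h₂ : c • u + d • w ∈ p) : u ∈ p := by
  have : (c - d)⁻¹ • ((c • u + d • w) - d • (u + w)) ∈ p :=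
    p.smul_mem _ (p.sub_mem h₂ (p.smul_mem _ h₁))
  convert this using 1
  rw [smul_add, add_sub_add_right_eq_sub, ← sub_smul, smul_smul,
    inv_mul_cancel₀ (sub_ne_zero.2 hcd), one_smul]

theorem inv_sq_ne_sq {F : Type*} [Field F] {q : F} (hq0 : q ≠ 0) (hq4 : q ^ 4 ≠ 1) :
    q⁻¹ ^ 2 ≠ q ^ 2 := by
  intro h
  apply hq4
  field_simp at h
  linear_combination -h

namespace Paper

section Relations

variable (F : Type*) [Field F] (q : F)

theorem uy'_mul_uy : uy' F q * uy F q = 1 := by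
  simpa [uy, uy'] using RingQuot.mkAlgHom_rel F (EqRel.y'y (F := F) (q := q))

theorem smul_ux_mul_uy_sub : q • (ux F q * uy F q) - q⁻¹ • (uy F q * ux F q)
    = (q - q⁻¹) • (1 : Usl2 F q) := by
  simpa [ux, uy] using RingQuot.mkAlgHom_rel F (EqRel.xy (F := F) (q := q))

theorem smul_uy_mul_uz_sub : q • (uy F q * uz F q) - q⁻¹ • (uz F q * uy F q)
    = (q - q⁻¹) • (1 : Usl2 F q) := by
  simpa [uy, uz] using RingQuot.mkAlgHom_rel F (EqRel.yz (F := F) (q := q))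

theorem adjoin_ux_uy_uy'_uz : Algebra.adjoin F {ux F q, uy F q, uy' F q, uz F q} = ⊤ := by
  have hgen : {ux F q, uy F q, uy' F q, uz F q}
      = RingQuot.mkAlgHom F (EqRel F q) '' Set.range (FreeAlgebra.ι F) := by
    ext u
    simp only [Set.mem_insert_iff, Set.mem_singleton_iff, ← Set.range_comp, Set.mem_range]
    constructor
    · rintro (rfl | rfl | rfl | rfl)
      exacts [⟨.x, rfl⟩, ⟨.y, rfl⟩, ⟨.y', rfl⟩, ⟨.z, rfl⟩]
    · rintro ⟨_ | _ | _ | _, rfl⟩ <;> simp [ux, uy, uy', uz]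
  rw [hgen, Algebra.adjoin_image, FreeAlgebra.adjoin_range_ι, Algebra.map_top,
    AlgHom.range_eq_top]
  exact RingQuot.mkAlgHom_surjective F (EqRel F q)

variable {F q}

theorem uy'_mul_ux_mul_uy (hq : q ≠ 0) :
    uy' F q * ux F q * uy F q = q⁻¹ ^ 2 • ux F q + (1 - q⁻¹ ^ 2) • uy' F q := by
  have h := congrArg (uy' F q * ·) (smul_ux_mul_uy_sub F q)
  simp only [mul_sub, mul_smul_comm, ← mul_assoc, uy'_mul_uy, one_mul, mul_one] at h
  linear_combination (norm := match_scalars) q⁻¹ • h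
  all_goals field_simp; ring

theorem uy'_mul_uz_mul_uy (hq : q ≠ 0) :
    uy' F q * uz F q * uy F q = q ^ 2 • uz F q + (1 - q ^ 2) • uy' F q := by
  have h := congrArg (uy' F q * ·) (smul_uy_mul_uz_sub F q)
  simp only [mul_sub, mul_smul_comm, ← mul_assoc, uy'_mul_uy, one_mul, mul_one] at h
  linear_combination (norm := match_scalars) (-q) • h
  all_goals field_simp; ring

theorem uy'_mul_uA_mul_uy (hq : q ≠ 0) (a : F) :
    uy' F q * uA F q a * uy F q
      = q⁻¹ ^ 2 • (a⁻¹ • ux F q) + q ^ 2 • (a • uz F q)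
        + (a⁻¹ * (1 - q⁻¹ ^ 2) + a * (1 - q ^ 2)) • uy' F q := by
  rw [uA, mul_add, add_mul, mul_smul_comm, mul_smul_comm, smul_mul_assoc, smul_mul_assoc,
    uy'_mul_ux_mul_uy hq, uy'_mul_uz_mul_uy hq]
  module

end Relations

theorem statement11_general (F : Type*) [Field F] (q : F) (hq0 : q ≠ 0) (hq4 : q ^ 4 ≠ 1)
    (a : F) (ha0 : a ≠ 0) :
    Algebra.adjoin F {uA F q a, uy F q, uy' F q} = ⊤ := by
  set S := Algebra.adjoin F {uA F q a, uy F q, uy' F q}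
  have hA : uA F q a ∈ S := Algebra.subset_adjoin (by simp)
  have hy : uy F q ∈ S := Algebra.subset_adjoin (by simp)
  have hy' : uy' F q ∈ S := Algebra.subset_adjoin (by simp)
  have hconj : q⁻¹ ^ 2 • (a⁻¹ • ux F q) + q ^ 2 • (a • uz F q) ∈ S := by
    rw [eq_sub_of_add_eq (uy'_mul_uA_mul_uy hq0 a).symm]
    exact sub_mem (mul_mem (mul_mem hy' hA) hy) (SMulMemClass.smul_mem _ hy')
  rw [uA] at hA
  have hx : a⁻¹ • ux F q ∈ S :=
    S.toSubmodule.mem_of_add_mem_of_smul_add_smul_mem (inv_sq_ne_sq hq0 hq4) hA hconj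
  have hz : a • uz F q ∈ S := by
    rw [add_comm] at hA hconj
    exact S.toSubmodule.mem_of_add_mem_of_smul_add_smul_mem (inv_sq_ne_sq hq0 hq4).symm hA hconj
  replace hx : ux F q ∈ S := (S.toSubmodule.smul_mem_iff (inv_ne_zero ha0)).1 hx
  replace hz : uz F q ∈ S := (S.toSubmodule.smul_mem_iff ha0).1 hz
  rw [eq_top_iff, ← adjoin_ux_uy_uy'_uz]
  exact Algebra.adjoin_le (by simp [Set.insert_subset_iff, hx, hy, hy', hz])

/-- **Lemma 7.10.** The elements `A` and `y^{±1}` together generate `U_q(sl2)`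
as an `𝔽`-algebra. -/
theorem statement11 (F : Type*) [Field F] (q : F) (hq0 : q ≠ 0) (hq4 : q ^ 4 ≠ 1)
    (a : F) (ha0 : a ≠ 0) (ha2 : a ^ 2 ≠ 1) :
    Algebra.adjoin F {uA F q a, uy F q, uy' F q} = ⊤ :=
  statement11_general F q hq0 hq4 a ha0

end Paper
end

section
/- In U_q(𝔰𝔩₂) the following relation holds: y²A − (q² + q⁻²)yAy + Ay² = −(a + a⁻¹)(q − q⁻¹)² y. -/
/-!
For `q ≠ 0` a relation `q w u − q⁻¹ u w = q − q⁻¹` reads `w u = q⁻² u w + (1 − q⁻²)`.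
Moving `w` through `u` twice collapses `u² w − (q² + q⁻²) u w u + w u²` to `−(q − q⁻¹)² u`.
Both `(x, y)` and, after `q ↦ q⁻¹`, `(z, y)` are such pairs, and the left-hand side is linear
in `A = a⁻¹ x + a z`.
-/

namespace Paper


section EquitablePair

variable {F R : Type*} [Field F] [Ring R] [Algebra F R]

/-- The shape `(q w u − q⁻¹ u w)/(q − q⁻¹) = 1` of each defining relation of the equitable
presentation, cleared of the denominator. -/
def IsEquitablePair (q : F) (w u : R) : Prop :=
  q • (w * u) - q⁻¹ • (u * w) = (q - q⁻¹) • (1 : R)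

theorem IsEquitablePair.swap_inv {q : F} {w u : R} (h : IsEquitablePair q w u) :
    IsEquitablePair q⁻¹ u w := by
  unfold IsEquitablePair at *
  rw [inv_inv, ← neg_sub q, neg_smul, ← h]
  module

theorem IsEquitablePair.cubic {q : F} (hq : q ≠ 0) {w u : R} (h : IsEquitablePair q w u) :
    u ^ 2 * w - (q ^ 2 + (q ^ 2)⁻¹) • (u * w * u) + w * u ^ 2 = (-(q - q⁻¹) ^ 2) • u := by
  have hwu : w * u = (q ^ 2)⁻¹ • (u * w) + (1 - (q ^ 2)⁻¹) • (1 : R) := by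
    have h' := congrArg (q⁻¹ • ·) h
    simp only [smul_sub, smul_smul, inv_mul_cancel₀ hq, one_smul] at h'
    rw [sub_eq_iff_eq_add] at h'
    rw [h']
    match_scalars <;> field_simp
  have huwu : u * w * u = (q ^ 2)⁻¹ • (u ^ 2 * w) + (1 - (q ^ 2)⁻¹) • u := by
    rw [mul_assoc, hwu, mul_add, mul_smul_comm, mul_smul_comm, mul_one, ← mul_assoc, ← sq]
  have hwuu : w * u ^ 2 = (q ^ 2)⁻¹ • (u * w * u) + (1 - (q ^ 2)⁻¹) • u := by
    rw [sq, ← mul_assoc, hwu, add_mul, smul_mul_assoc, smul_mul_assoc, one_mul]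
  rw [hwuu, huwu]
  match_scalars <;> field_simp <;> ring

end EquitablePair

theorem isEquitablePair_ux_uy (F : Type*) [Field F] (q : F) :
    IsEquitablePair q (ux F q) (uy F q) := by
  simpa only [IsEquitablePair, ux, uy, map_sub, map_smul, map_mul, map_one] using
    RingQuot.mkAlgHom_rel F (EqRel.xy (F := F) (q := q))

theorem isEquitablePair_uy_uz (F : Type*) [Field F] (q : F) :
    IsEquitablePair q (uy F q) (uz F q) := by
  simpa only [IsEquitablePair, uy, uz, map_sub, map_smul, map_mul, map_one] using
    RingQuot.mkAlgHom_rel F (EqRel.yz (F := F) (q := q))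

theorem statement12_general (F : Type*) [Field F] (q : F) (hq0 : q ≠ 0) (a : F) :
    uy F q ^ 2 * uA F q a - (q ^ 2 + (q ^ 2)⁻¹) • (uy F q * uA F q a * uy F q)
        + uA F q a * uy F q ^ 2
      = (-((a + a⁻¹) * (q - q⁻¹) ^ 2)) • uy F q := by
  have hx := (isEquitablePair_ux_uy F q).cubic hq0
  have hz := (isEquitablePair_uy_uz F q).swap_inv.cubic (inv_ne_zero hq0)
  simp only [inv_pow, inv_inv] at hz
  calc _ = a⁻¹ • (uy F q ^ 2 * ux F q - (q ^ 2 + (q ^ 2)⁻¹) • (uy F q * ux F q * uy F q)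
            + ux F q * uy F q ^ 2)
        + a • (uy F q ^ 2 * uz F q - ((q ^ 2)⁻¹ + q ^ 2) • (uy F q * uz F q * uy F q)
            + uz F q * uy F q ^ 2) := by
        simp only [uA, mul_add, add_mul, smul_mul_assoc, mul_smul_comm]
        module
    _ = _ := by
      rw [hx, hz]
      match_scalars
      ring

/-- **Corollary 7.13.** In `U_q(sl2)`:
`y²A − (q² + q⁻²)yAy + Ay² = −(a + a⁻¹)(q − q⁻¹)² y`. -/
theorem statement12 (F : Type*) [Field F] (q : F) (hq0 : q ≠ 0) (hq4 : q ^ 4 ≠ 1)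
    (a : F) (ha0 : a ≠ 0) (ha2 : a ^ 2 ≠ 1) :
    uy F q ^ 2 * uA F q a - (q ^ 2 + (q ^ 2)⁻¹) • (uy F q * uA F q a * uy F q)
        + uA F q a * uy F q ^ 2
      = (-((a + a⁻¹) * (q - q⁻¹) ^ 2)) • uy F q :=
  statement12_general F q hq0 a

end Paper
end

section
/- In U_q(𝔰𝔩₂) the elements A and y satisfy the tridiagonal relations: y³A − [3]_q y²Ay + [3]_q yAy² − Ay³ = 0, and A³y − [3]_q A²yA + [3]_q AyA² − yA³ = (q² − q⁻²)²(yA − Ay), where [3]_q = (q³ − q⁻³)/(q − q⁻¹). -/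
/-
Both relations have the shape `[b, b²v − (q² + q⁻²) b v b + v b²] = …`. For `b = y` the inner
element is a multiple of `y`, because `x` and `z` each `q`-commute with `y` to a scalar. For
`b = A`, `v = y` it is, up to `−(q² − q⁻²)² y`, a combination of `A` and the Casimir element
`q x + q⁻¹ y + q z − q x y z`, which commutes with `x` and `z`.
-/

namespace Paper

section QCommutation

variable {F R : Type*} [Field F] [Ring R] [Algebra F R]

def tridiagQuad (q : F) (b v : R) : R :=
  b ^ 2 * v - (q ^ 2 + q⁻¹ ^ 2) • (b * v * b) + v * b ^ 2

def tridiagPolar (q : F) (u w v : R) : R :=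
  u * w * v + w * u * v - (q ^ 2 + q⁻¹ ^ 2) • (u * v * w + w * v * u) + v * u * w + v * w * u

theorem tridiag_cubic_eq_commutator (q : F) (b v : R) :
    b ^ 3 * v - (q ^ 2 + 1 + q⁻¹ ^ 2) • (b ^ 2 * v * b)
        + (q ^ 2 + 1 + q⁻¹ ^ 2) • (b * v * b ^ 2) - v * b ^ 3
      = b * tridiagQuad q b v - tridiagQuad q b v * b := by
  simp only [tridiagQuad, pow_succ, pow_zero, one_mul, mul_add, add_mul, mul_sub, sub_mul,
    smul_mul_assoc, mul_smul_comm, mul_assoc]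
  match_scalars <;> ring

theorem tridiagQuad_smul_add_smul_right (q s t : F) (b u w : R) :
    tridiagQuad q b (s • u + t • w) = s • tridiagQuad q b u + t • tridiagQuad q b w := by
  simp only [tridiagQuad, mul_add, add_mul, smul_mul_assoc, mul_smul_comm, smul_add, smul_sub,
    smul_smul, mul_assoc]
  match_scalars <;> ring

theorem tridiagQuad_smul_add_smul_left (q s t : F) (u w v : R) :
    tridiagQuad q (s • u + t • w) v
      = s ^ 2 • tridiagQuad q u v + t ^ 2 • tridiagQuad q w v + (s * t) • tridiagPolar q u w v := by
  simp only [tridiagQuad, tridiagPolar, pow_two, mul_add, add_mul, smul_mul_assoc, mul_smul_comm,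
    smul_add, smul_sub, smul_smul, mul_assoc]
  match_scalars <;> ring

variable {q : F} {u v w : R}

theorem tridiagQuad_left_of_qcomm (hq : q ≠ 0)
    (h : q • (u * v) - q⁻¹ • (v * u) = (q - q⁻¹) • (1 : R)) :
    tridiagQuad q u v = -(q - q⁻¹) ^ 2 • u := by
  linear_combination (norm := skip) q⁻¹ • (u * h) - q • (h * u)
  simp only [tridiagQuad, pow_two, mul_sub, sub_mul, smul_mul_assoc, mul_smul_comm, smul_sub,
    smul_smul, mul_assoc, mul_one, one_mul]
  match_scalars <;> field_simp <;> ring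

theorem tridiagQuad_right_of_qcomm (hq : q ≠ 0)
    (h : q • (u * v) - q⁻¹ • (v * u) = (q - q⁻¹) • (1 : R)) :
    tridiagQuad q v u = -(q - q⁻¹) ^ 2 • v := by
  linear_combination (norm := skip) -q • (v * h) + q⁻¹ • (h * v)
  simp only [tridiagQuad, pow_two, mul_sub, sub_mul, smul_mul_assoc, mul_smul_comm, smul_sub,
    smul_smul, mul_assoc, mul_one, one_mul]
  match_scalars <;> field_simp <;> ring

theorem commutator_mul_of_qcomm (hq : q ≠ 0)
    (huv : q • (u * v) - q⁻¹ • (v * u) = (q - q⁻¹) • (1 : R))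
    (hwu : q • (w * u) - q⁻¹ • (u * w) = (q - q⁻¹) • (1 : R)) :
    u * (v * w) - v * w * u = (1 - q⁻¹ ^ 2) • (w - v) := by
  linear_combination (norm := skip) q⁻¹ • (huv * w) - q⁻¹ • (v * hwu)
  simp only [mul_sub, sub_mul, smul_mul_assoc, mul_smul_comm, smul_sub, smul_smul, mul_assoc,
    mul_one, one_mul]
  match_scalars <;> field_simp <;> ring

end QCommutation

section Equitable

variable {F R : Type*} [Field F] [Ring R] [Algebra F R]

structure IsEquitableTriple (q : F) (x y z : R) : Prop where
  xy : q • (x * y) - q⁻¹ • (y * x) = (q - q⁻¹) • (1 : R)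
  yz : q • (y * z) - q⁻¹ • (z * y) = (q - q⁻¹) • (1 : R)
  zx : q • (z * x) - q⁻¹ • (x * z) = (q - q⁻¹) • (1 : R)

/-- Terwilliger's Casimir element of `U_q(sl₂)` in the equitable presentation. -/
def casimir (q : F) (x y z : R) : R :=
  q • x + q⁻¹ • y + q • z - q • (x * y * z)

variable {q : F} {x y z : R}

theorem IsEquitableTriple.commute_casimir_left (h : IsEquitableTriple q x y z) (hq : q ≠ 0) :
    Commute x (casimir q x y z) := by
  have hc := commutator_mul_of_qcomm hq h.xy h.zx
  rw [Commute, SemiconjBy, ← sub_eq_zero]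
  linear_combination (norm := skip) h.xy - h.zx - q • (x * hc)
  simp only [casimir, mul_add, add_mul, mul_sub, sub_mul, smul_mul_assoc, mul_smul_comm, smul_sub,
    smul_smul, mul_assoc, mul_one]
  match_scalars <;> field_simp <;> ring

theorem IsEquitableTriple.commute_casimir_right (h : IsEquitableTriple q x y z) (hq : q ≠ 0) :
    Commute z (casimir q x y z) := by
  have hc := commutator_mul_of_qcomm hq h.zx h.yz
  rw [Commute, SemiconjBy, ← sub_eq_zero]
  linear_combination (norm := skip) h.zx - h.yz - q • (hc * z)
  simp only [casimir, mul_add, add_mul, mul_sub, sub_mul, smul_mul_assoc, mul_smul_comm, smul_sub,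
    smul_smul, mul_assoc, mul_one]
  match_scalars <;> field_simp <;> ring

theorem IsEquitableTriple.tridiagPolar_eq (h : IsEquitableTriple q x y z) (hq : q ≠ 0) :
    tridiagPolar q x z y + (q ^ 2 - q⁻¹ ^ 2) ^ 2 • y
      = ((q ^ 2 - q⁻¹ ^ 2) * (q - q⁻¹)) • casimir q x y z - (q - q⁻¹) ^ 2 • (x + z) := by
  have hc := commutator_mul_of_qcomm hq h.xy h.zx
  linear_combination (norm := skip) ((q ^ 2 - q⁻¹ ^ 2) * q ^ 2) • hc - q • (x * h.yz)
    + q ^ 3 • (h.yz * x) + q⁻¹ • (z * h.xy) - q • (h.xy * z)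
  simp only [tridiagPolar, casimir, mul_sub, sub_mul, smul_mul_assoc, mul_smul_comm, smul_sub,
    smul_add, smul_smul, mul_assoc, mul_one, one_mul]
  match_scalars <;> field_simp <;> ring

theorem IsEquitableTriple.tridiagQuad_y_xz (h : IsEquitableTriple q x y z) (hq : q ≠ 0)
    (s t : F) : tridiagQuad q y (s • x + t • z) = -((q - q⁻¹) ^ 2 * (s + t)) • y := by
  rw [tridiagQuad_smul_add_smul_right, tridiagQuad_right_of_qcomm hq h.xy,
    tridiagQuad_left_of_qcomm hq h.yz, smul_smul, smul_smul, ← add_smul]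
  ring_nf

theorem IsEquitableTriple.tridiagQuad_xz_y (h : IsEquitableTriple q x y z) (hq : q ≠ 0)
    {a : F} (ha : a ≠ 0) :
    tridiagQuad q (a⁻¹ • x + a • z) y + (q ^ 2 - q⁻¹ ^ 2) ^ 2 • y
      = ((q ^ 2 - q⁻¹ ^ 2) * (q - q⁻¹)) • casimir q x y z
        - ((q - q⁻¹) ^ 2 * (a + a⁻¹)) • (a⁻¹ • x + a • z) := by
  rw [tridiagQuad_smul_add_smul_left, tridiagQuad_left_of_qcomm hq h.xy,
    tridiagQuad_right_of_qcomm hq h.yz, inv_mul_cancel₀ ha, one_smul, add_assoc,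
    h.tridiagPolar_eq hq]
  match_scalars <;> field_simp <;> ring

theorem IsEquitableTriple.tridiag_relation_y_xz (h : IsEquitableTriple q x y z) (hq : q ≠ 0)
    (s t : F) :
    y ^ 3 * (s • x + t • z) - (q ^ 2 + 1 + q⁻¹ ^ 2) • (y ^ 2 * (s • x + t • z) * y)
        + (q ^ 2 + 1 + q⁻¹ ^ 2) • (y * (s • x + t • z) * y ^ 2) - (s • x + t • z) * y ^ 3
      = 0 := by
  rw [tridiag_cubic_eq_commutator, h.tridiagQuad_y_xz hq, mul_smul_comm, smul_mul_assoc,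
    sub_self]

theorem IsEquitableTriple.tridiag_relation_xz_y (h : IsEquitableTriple q x y z) (hq : q ≠ 0)
    {a : F} (ha : a ≠ 0) :
    (a⁻¹ • x + a • z) ^ 3 * y
        - (q ^ 2 + 1 + q⁻¹ ^ 2) • ((a⁻¹ • x + a • z) ^ 2 * y * (a⁻¹ • x + a • z))
        + (q ^ 2 + 1 + q⁻¹ ^ 2) • ((a⁻¹ • x + a • z) * y * (a⁻¹ • x + a • z) ^ 2)
        - y * (a⁻¹ • x + a • z) ^ 3
      = (q ^ 2 - q⁻¹ ^ 2) ^ 2 • (y * (a⁻¹ • x + a • z) - (a⁻¹ • x + a • z) * y) := by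
  set A := a⁻¹ • x + a • z
  have hcomm : Commute A (tridiagQuad q A y + (q ^ 2 - q⁻¹ ^ 2) ^ 2 • y) := by
    rw [h.tridiagQuad_xz_y hq ha]
    have hcas : Commute A (casimir q x y z) :=
      ((h.commute_casimir_left hq).smul_left _).add_left ((h.commute_casimir_right hq).smul_left _)
    exact (hcas.smul_right _).sub_right ((Commute.refl A).smul_right _)
  rw [tridiag_cubic_eq_commutator]
  linear_combination (norm := skip) hcomm.eq
  simp only [mul_add, add_mul, mul_smul_comm, smul_mul_assoc, smul_sub]
  abel

end Equitable

theorem isEquitableTriple_generators (F : Type*) [Field F] (q : F) :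
    IsEquitableTriple q (ux F q) (uy F q) (uz F q) where
  xy := by
    simpa only [map_sub, map_smul, map_mul, map_one, ux, uy] using
      RingQuot.mkAlgHom_rel F (EqRel.xy (F := F) (q := q))
  yz := by
    simpa only [map_sub, map_smul, map_mul, map_one, uy, uz] using
      RingQuot.mkAlgHom_rel F (EqRel.yz (F := F) (q := q))
  zx := by
    simpa only [map_sub, map_smul, map_mul, map_one, ux, uz] using
      RingQuot.mkAlgHom_rel F (EqRel.zx (F := F) (q := q))

theorem qInt_three_eq {F : Type*} [Field F] {q : F} (hq : q ≠ 0) (hq2 : q ^ 2 ≠ 1) :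
    (q ^ 3 - (q ^ 3)⁻¹) / (q - q⁻¹) = q ^ 2 + 1 + q⁻¹ ^ 2 := by
  have hq' : q - q⁻¹ ≠ 0 := fun h => hq2 (by field_simp at h; linear_combination h)
  rw [div_eq_iff hq']
  field_simp
  ring

theorem statement14_general (F : Type*) [Field F] (q : F) (hq0 : q ≠ 0) (hq4 : q ^ 4 ≠ 1)
    (a : F) (ha0 : a ≠ 0) :
    (uy F q ^ 3 * uA F q a
        - ((q ^ 3 - (q ^ 3)⁻¹) / (q - q⁻¹)) • (uy F q ^ 2 * uA F q a * uy F q)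
        + ((q ^ 3 - (q ^ 3)⁻¹) / (q - q⁻¹)) • (uy F q * uA F q a * uy F q ^ 2)
        - uA F q a * uy F q ^ 3 = 0) ∧
    (uA F q a ^ 3 * uy F q
        - ((q ^ 3 - (q ^ 3)⁻¹) / (q - q⁻¹)) • (uA F q a ^ 2 * uy F q * uA F q a)
        + ((q ^ 3 - (q ^ 3)⁻¹) / (q - q⁻¹)) • (uA F q a * uy F q * uA F q a ^ 2)
        - uy F q * uA F q a ^ 3
      = ((q ^ 2 - (q ^ 2)⁻¹) ^ 2) •
          (uy F q * uA F q a - uA F q a * uy F q)) := by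
  have hq2 : q ^ 2 ≠ 1 := fun h => hq4 (by rw [show q ^ 4 = (q ^ 2) ^ 2 by ring, h, one_pow])
  have h := isEquitableTriple_generators F q
  rw [qInt_three_eq hq0 hq2, ← inv_pow]
  exact ⟨h.tridiag_relation_y_xz hq0 _ _, h.tridiag_relation_xz_y hq0 ha0⟩

/-- **Proposition 7.16 (tridiagonal relations).** In `U_q(sl2)`:
`y³A − [3]_q y²Ay + [3]_q yAy² − Ay³ = 0` and
`A³y − [3]_q A²yA + [3]_q AyA² − yA³ = (q² − q⁻²)²(yA − Ay)`,
where `[3]_q = (q³ − q⁻³)/(q − q⁻¹)`. -/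
theorem statement14 (F : Type*) [Field F] (q : F) (hq0 : q ≠ 0) (hq4 : q ^ 4 ≠ 1)
    (a : F) (ha0 : a ≠ 0) (ha2 : a ^ 2 ≠ 1) :
    (uy F q ^ 3 * uA F q a
        - ((q ^ 3 - (q ^ 3)⁻¹) / (q - q⁻¹)) • (uy F q ^ 2 * uA F q a * uy F q)
        + ((q ^ 3 - (q ^ 3)⁻¹) / (q - q⁻¹)) • (uy F q * uA F q a * uy F q ^ 2)
        - uA F q a * uy F q ^ 3 = 0) ∧
    (uA F q a ^ 3 * uy F q
        - ((q ^ 3 - (q ^ 3)⁻¹) / (q - q⁻¹)) • (uA F q a ^ 2 * uy F q * uA F q a)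
        + ((q ^ 3 - (q ^ 3)⁻¹) / (q - q⁻¹)) • (uA F q a * uy F q * uA F q a ^ 2)
        - uy F q * uA F q a ^ 3
      = ((q ^ 2 - (q ^ 2)⁻¹) ^ 2) •
          (uy F q * uA F q a - uA F q a * uy F q)) :=
  statement14_general F q hq0 hq4 a ha0

end Paper
end
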